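/- arXiv:1804.03205 — 2 statements merged into one kernel-verified Lean document; each statement's English description precedes it below -/
import Mathlib

section
/- Touchard's genetic-sum formula: A_n = Σ_{i_1=0}^{0} Σ_{i_2=0}^{i_1+1} Σ_{i_3=0}^{i_2+1} ⋯ Σ_{i_n=0}^{i_{n-1}+1} a_{i_1} a_{i_2} ⋯ a_{i_n}, where A_n is the Dyck path weight polynomial of length 2n. -/
open MvPolynomial

/-- `true` is an up step `(1,1)`, `false` a down step `(1,-1)`. -/
def pstep (b : Bool) : ℤ := if b then 1 else -1

/-- The height of the path `s` after `k` steps (starting at height `0`). -/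
def ht {N : ℕ} (s : Fin N → Bool) (k : ℕ) : ℤ :=
  ∑ i : Fin N, if (i : ℕ) < k then pstep (s i) else 0

/-- The Dyck paths of length `2n`. -/
def DyckFinset (n : ℕ) : Finset (Fin (2 * n) → Bool) :=
  Finset.univ.filter (fun s => ht s (2 * n) = 0 ∧ ∀ k, k ≤ 2 * n → 0 ≤ ht s k)

/-- The weight polynomial of Dyck paths of length `2n`: a down step ending at
height `m` contributes `a_m = X m`. -/
noncomputable def Apoly (n : ℕ) : MvPolynomial ℕ ℤ :=
  ∑ s ∈ DyckFinset n,
    ∏ i : Fin (2 * n), if s i then 1 else X ((ht s ((i : ℕ) + 1)).toNat)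

/-- The iterated ("genetic") sum
`touch m b = ∑_{i=0}^{b-1} a_i · touch (m-1) (i+2)`, so that `touch n 1` is
`∑_{i_1=0}^{0} ∑_{i_2=0}^{i_1+1} ⋯ ∑_{i_n=0}^{i_{n-1}+1} a_{i_1} a_{i_2} ⋯ a_{i_n}`. -/
noncomputable def touch : ℕ → ℕ → MvPolynomial ℕ ℤ
  | 0, _ => 1
  | (m + 1), b => ∑ i ∈ Finset.range b, X i * touch m (i + 2)

/-! Generalize from Dyck paths to nonnegative paths of length `N` from height `0` to height `j`,
with the same weights, and call their total weight `ballotSum N j`. The last step is either an up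
step from `j - 1` or a down step from `j + 1` weighted `a_j`, so
`ballotSum (N+1) j = ballotSum N (j-1) + a_j · ballotSum N (j+1)`. Splitting off the last term of
the outer sum shows that the genetic sum obeys the same recursion,
`touch m (j+1) = touch m j + a_j · touch (m-1) (j+2)`, hence `ballotSum (2m + j) j = touch m (j+1)`
by induction; `A_n` is `ballotSum (2n) 0`. -/

def ballotPaths (N : ℕ) (j : ℤ) : Finset (Fin N → Bool) :=
  Finset.univ.filter (fun s => ht s N = j ∧ ∀ k, k ≤ N → 0 ≤ ht s k)

noncomputable def downWeight {N : ℕ} (s : Fin N → Bool) : MvPolynomial ℕ ℤ :=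
  ∏ i : Fin N, if s i then 1 else X ((ht s ((i : ℕ) + 1)).toNat)

noncomputable def ballotSum (N : ℕ) (j : ℤ) : MvPolynomial ℕ ℤ :=
  ∑ s ∈ ballotPaths N j, downWeight s

lemma ht_zero {N : ℕ} (s : Fin N → Bool) : ht s 0 = 0 := by
  simp [ht]

lemma ht_snoc_of_le {N : ℕ} (s : Fin N → Bool) (b : Bool) {k : ℕ} (hk : k ≤ N) :
    ht (Fin.snoc s b : Fin (N + 1) → Bool) k = ht s k := by
  simp [ht, Fin.sum_univ_castSucc, hk.not_gt]

lemma ht_snoc_last {N : ℕ} (s : Fin N → Bool) (b : Bool) :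
    ht (Fin.snoc s b : Fin (N + 1) → Bool) (N + 1) = ht s N + pstep b := by
  simp [ht, Fin.sum_univ_castSucc]

lemma snoc_mem_ballotPaths {N : ℕ} {j : ℤ} (s : Fin N → Bool) (b : Bool) :
    (Fin.snoc s b : Fin (N + 1) → Bool) ∈ ballotPaths (N + 1) j ↔
      s ∈ ballotPaths N (j - pstep b) ∧ 0 ≤ j := by
  have hprefix : (∀ k ≤ N, 0 ≤ ht (Fin.snoc s b : Fin (N + 1) → Bool) k) ↔ ∀ k ≤ N, 0 ≤ ht s k :=
    forall₂_congr fun k hk => by rw [ht_snoc_of_le s b hk]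
  simp only [ballotPaths, Finset.mem_filter, Finset.mem_univ, true_and, Nat.le_succ_iff, or_imp,
    forall_and, forall_eq, ht_snoc_last, hprefix]
  constructor
  · rintro ⟨hend, hpos, hlast⟩
    exact ⟨⟨by omega, hpos⟩, by omega⟩
  · rintro ⟨⟨hend, hpos⟩, hj⟩
    exact ⟨by omega, hpos, by omega⟩

lemma downWeight_snoc {N : ℕ} {j : ℤ} {s : Fin N → Bool} {b : Bool}
    (hs : s ∈ ballotPaths N (j - pstep b)) :
    downWeight (Fin.snoc s b : Fin (N + 1) → Bool) = downWeight s * if b then 1 else X j.toNat := by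
  have hend : ht s N + pstep b = j := by
    simp only [ballotPaths, Finset.mem_filter] at hs
    omega
  rw [downWeight, Fin.prod_univ_castSucc, Fin.val_last, ht_snoc_last, hend]
  simp only [Fin.snoc_castSucc, Fin.snoc_last, Fin.val_castSucc]
  congr 1
  exact Finset.prod_congr rfl fun i _ => by rw [ht_snoc_of_le s b i.isLt]

lemma Fin.sum_univ_pi_snoc {M α : Type*} [AddCommMonoid M] [Fintype α] {N : ℕ}
    (f : (Fin (N + 1) → α) → M) : ∑ s, f s = ∑ a, ∑ s : Fin N → α, f (Fin.snoc s a) :=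
  ((Fin.snocEquiv fun _ => α).sum_comp f).symm.trans (Fintype.sum_prod_type _)

lemma sum_snoc_mem_ballotPaths (N : ℕ) {j : ℤ} (hj : 0 ≤ j) (b : Bool) :
    ∑ s : Fin N → Bool, (if (Fin.snoc s b : Fin (N + 1) → Bool) ∈ ballotPaths (N + 1) j
        then downWeight (Fin.snoc s b : Fin (N + 1) → Bool) else 0) =
      (if b then 1 else X j.toNat) * ballotSum N (j - pstep b) := by
  rw [ballotSum, Finset.mul_sum, ← Finset.sum_ite_mem_eq (ballotPaths N _)]
  refine Finset.sum_congr rfl fun s _ => ?_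
  simp only [snoc_mem_ballotPaths, hj, and_true]
  by_cases hs : s ∈ ballotPaths N (j - pstep b)
  · rw [if_pos hs, if_pos hs, downWeight_snoc hs, mul_comm]
  · rw [if_neg hs, if_neg hs]

lemma ballotSum_succ (N : ℕ) {j : ℤ} (hj : 0 ≤ j) :
    ballotSum (N + 1) j = ballotSum N (j - 1) + X j.toNat * ballotSum N (j + 1) := by
  rw [ballotSum, ← Finset.sum_ite_mem_eq, Fin.sum_univ_pi_snoc, Fintype.sum_bool,
    sum_snoc_mem_ballotPaths N hj, sum_snoc_mem_ballotPaths N hj]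
  simp [pstep]

lemma ballotSum_of_neg (N : ℕ) {j : ℤ} (hj : j < 0) : ballotSum N j = 0 := by
  refine Finset.sum_eq_zero fun s hs => ?_
  simp only [ballotPaths, Finset.mem_filter] at hs
  have := hs.2.2 N le_rfl
  omega

lemma ballotSum_of_lt {N : ℕ} {j : ℤ} (hj : N < j) : ballotSum N j = 0 := by
  induction N generalizing j with
  | zero =>
    refine Finset.sum_eq_zero fun s hs => ?_
    simp only [ballotPaths, Finset.mem_filter, ht_zero] at hs
    omega
  | succ N ih =>
    rw [ballotSum_succ N (by omega), ih (by omega), ih (by omega), mul_zero, add_zero]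

lemma ballotSum_self (j : ℕ) : ballotSum j j = 1 := by
  induction j with
  | zero => simp [ballotSum, ballotPaths, downWeight, ht_zero]
  | succ j ih =>
    rw [Nat.cast_succ, ballotSum_succ j (by positivity), add_sub_cancel_right, ih,
      ballotSum_of_lt (by omega), mul_zero, add_zero]

lemma touch_succ_succ (m b : ℕ) :
    touch (m + 1) (b + 1) = touch (m + 1) b + X b * touch m (b + 2) :=
  Finset.sum_range_succ _ _

lemma ballotSum_eq_touch (m j : ℕ) : ballotSum (2 * m + j) j = touch m (j + 1) := by
  induction m generalizing j with
  | zero => simpa [touch] using ballotSum_self j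
  | succ m ihm =>
    induction j with
    | zero =>
      rw [show 2 * (m + 1) + 0 = (2 * m + 1) + 1 by ring, Nat.cast_zero, ballotSum_succ _ le_rfl,
        ballotSum_of_neg _ (by norm_num), touch_succ_succ]
      simpa [touch] using ihm 1
    | succ j ihj =>
      have h := ihm (j + 2)
      rw [show 2 * m + (j + 2) = 2 * (m + 1) + j by ring] at h
      push_cast at h
      rw [show 2 * (m + 1) + (j + 1) = (2 * (m + 1) + j) + 1 by ring, Nat.cast_succ,
        ballotSum_succ _ (by positivity), add_sub_cancel_right, ihj, add_assoc, one_add_one_eq_two, h,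
        touch_succ_succ m (j + 1)]
      simp

/-- Touchard's genetic-sum formula:
`A_n = ∑_{i_1=0}^{0} ∑_{i_2=0}^{i_1+1} ⋯ ∑_{i_n=0}^{i_{n-1}+1} a_{i_1} ⋯ a_{i_n}`. -/
theorem Apoly_eq_genetic_sum (n : ℕ) : Apoly n = touch n 1 := by
  calc Apoly n = ballotSum (2 * n) 0 := rfl
    _ = touch n 1 := by simpa using ballotSum_eq_touch n 0
end

section
/- Define recursively, for k, n ≥ 0, α_n^{(k)} by α_0^{(k)} = 1, α_n^{(0)} = 0 for n > 0, and α_n^{(k)} = Σ_{j=0}^{n} binom(j+k-1, k-1) m_j α_{n-j}^{(j)} for k ≥ 1 (with binom(j-1,-1) interpreted as the indicator of j=0). Then the sequence ω_n := Σ_{j=0}^{n} Σ_{ℓ=0}^{n-j} m_j α_ℓ^{(j)} α_{n-j-ℓ}^{(j+1)} also satisfies ω_n = Σ_{j=0}^{n} Σ_{i=0}^{j} Σ_{ℓ=0}^{n-j} binom(j,i) m_i m_{j-i} α_ℓ^{(i)} α_{n-j-ℓ}^{(j-i)}. -/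
/-!
Write `j = i + t` in the right-hand side and move the sum over `t` innermost, below the
sum over `ℓ`. Since `C(i + t, i) = C(t + (i + 1) - 1, (i + 1) - 1)`, that innermost sum
`∑_t C(i + t, i) m_t α_{n-i-ℓ-t}^{(t)}` is the defining recursion of `α_{n-i-ℓ}^{(i+1)}`,
which leaves exactly the left-hand side.
-/

open Finset

theorem Finset.sum_range_triangle_comm {M : Type*} [AddCommMonoid M] (N : ℕ) (f : ℕ → ℕ → M) :
    ∑ a ∈ range (N + 1), ∑ b ∈ range (N - a + 1), f a b =
      ∑ b ∈ range (N + 1), ∑ a ∈ range (N - b + 1), f a b :=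
  sum_comm' (by simp only [mem_range]; omega)

theorem Finset.sum_range_sum_range_succ_eq_sum_add {M : Type*} [AddCommMonoid M] (n : ℕ)
    (g : ℕ → ℕ → M) :
    ∑ j ∈ range (n + 1), ∑ i ∈ range (j + 1), g j i =
      ∑ i ∈ range (n + 1), ∑ t ∈ range (n - i + 1), g (i + t) i := by
  calc ∑ j ∈ range (n + 1), ∑ i ∈ range (j + 1), g j i
      = ∑ j ∈ range (n + 1), ∑ i ∈ range (j + 1), g (i + (j - i)) i :=
        sum_congr rfl fun j _ ↦ sum_congr rfl fun i hi ↦ by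
          rw [Nat.add_sub_cancel' (Nat.le_of_lt_succ (mem_range.mp hi))]
    _ = ∑ i ∈ range (n + 1), ∑ t ∈ range (n + 1 - i), g (i + t) i :=
        sum_range_diag_flip (n + 1) fun i t ↦ g (i + t) i
    _ = _ := sum_congr rfl fun i hi ↦ by
        rw [Nat.sub_add_comm (Nat.le_of_lt_succ (mem_range.mp hi))]

theorem sum_choose_mul_eq_succ {R : Type*} [CommRing R] {m : ℕ → R} {α : ℕ → ℕ → R}
    (hrec : ∀ n k, 1 ≤ k →
      α n k = ∑ j ∈ range (n + 1), (Nat.choose (j + k - 1) (k - 1) : R) * m j * α (n - j) j)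
    (N i : ℕ) :
    ∑ t ∈ range (N + 1), (Nat.choose (i + t) i : R) * m t * α (N - t) t = α N (i + 1) := by
  rw [hrec N (i + 1) (Nat.le_add_left 1 i), Nat.add_sub_cancel]
  simp only [← add_assoc, Nat.add_sub_cancel, add_comm _ i]

theorem omega_two_formulas_general {R : Type*} [CommRing R] (m : ℕ → R)
    (α : ℕ → ℕ → R)
    (hrec : ∀ n k, 1 ≤ k →
      α n k = ∑ j ∈ Finset.range (n + 1),
        (Nat.choose (j + k - 1) (k - 1) : R) * m j * α (n - j) j) :
    ∀ n, (∑ j ∈ Finset.range (n + 1), ∑ ℓ ∈ Finset.range (n - j + 1),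
            m j * α ℓ j * α (n - j - ℓ) (j + 1))
        = ∑ j ∈ Finset.range (n + 1), ∑ i ∈ Finset.range (j + 1),
            ∑ ℓ ∈ Finset.range (n - j + 1),
              (Nat.choose j i : R) * m i * m (j - i) * α ℓ i * α (n - j - ℓ) (j - i) := by
  intro n
  rw [sum_range_sum_range_succ_eq_sum_add]
  refine sum_congr rfl fun i _ ↦ ?_
  simp only [Nat.add_sub_cancel_left, ← Nat.sub_sub]
  rw [sum_range_triangle_comm (n - i)]
  refine sum_congr rfl fun ℓ _ ↦ ?_
  rw [← sum_choose_mul_eq_succ hrec, mul_sum]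
  refine sum_congr rfl fun t _ ↦ ?_
  rw [Nat.sub_right_comm]
  ring

/-- Let `α n k` play the role of `α_n^{(k)}`, defined recursively by
`α_0^{(k)} = 1`, `α_n^{(0)} = 0` for `n > 0`, and, for `k ≥ 1`,
`α_n^{(k)} = ∑_{j=0}^n C(j+k-1, k-1) m_j α_{n-j}^{(j)}`.
Then `ω_n := ∑_{j=0}^n ∑_{ℓ=0}^{n-j} m_j α_ℓ^{(j)} α_{n-j-ℓ}^{(j+1)}` also satisfies
`ω_n = ∑_{j=0}^n ∑_{i=0}^j ∑_{ℓ=0}^{n-j} C(j,i) m_i m_{j-i} α_ℓ^{(i)} α_{n-j-ℓ}^{(j-i)}`. -/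
theorem omega_two_formulas {R : Type*} [CommRing R] (m : ℕ → R) (hm0 : m 0 = 1)
    (α : ℕ → ℕ → R)
    (hα0 : ∀ k, α 0 k = 1)
    (hα0' : ∀ n, 0 < n → α n 0 = 0)
    (hrec : ∀ n k, 1 ≤ k →
      α n k = ∑ j ∈ Finset.range (n + 1),
        (Nat.choose (j + k - 1) (k - 1) : R) * m j * α (n - j) j) :
    ∀ n, (∑ j ∈ Finset.range (n + 1), ∑ ℓ ∈ Finset.range (n - j + 1),
            m j * α ℓ j * α (n - j - ℓ) (j + 1))
        = ∑ j ∈ Finset.range (n + 1), ∑ i ∈ Finset.range (j + 1),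
            ∑ ℓ ∈ Finset.range (n - j + 1),
              (Nat.choose j i : R) * m i * m (j - i) * α ℓ i * α (n - j - ℓ) (j - i) :=
  omega_two_formulas_general m α hrec
end
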